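/- arXiv:2410.21053 — 2 statements merged into one kernel-verified Lean document; each statement's English description precedes it below -/
import Mathlib

section
/- For weight matrices W₀, …, W_ℓ of compatible sizes, the quantity K = max over diagonal matrices D₁ ∈ 𝒟₁, …, D_ℓ ∈ 𝒟_ℓ of ‖W_ℓ D_ℓ W_{ℓ-1} D_{ℓ-1} ⋯ D₁ W₀‖ equals the same maximum restricted to diagonal matrices whose diagonal entries all lie in {0,1}. -/
/-- The product `W ℓ * D ℓ * W (ℓ-1) * D (ℓ-1) * ⋯ * D 1 * W 0`. -/
def chainWD (a : ℕ → ℕ) (W : ∀ r : ℕ, Matrix (Fin (a (r+1))) (Fin (a r)) ℝ)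
    (D : ∀ r : ℕ, Matrix (Fin (a r)) (Fin (a r)) ℝ) :
    (k : ℕ) → Matrix (Fin (a (k+1))) (Fin (a 0)) ℝ
  | 0 => W 0
  | k+1 => W (k+1) * (D (k+1) * chainWD a W D k)

lemma chainWD_congr (a : ℕ → ℕ) (W : ∀ r : ℕ, Matrix (Fin (a (r+1))) (Fin (a r)) ℝ)
    (D D' : ∀ r : ℕ, Matrix (Fin (a r)) (Fin (a r)) ℝ) (k : ℕ)
    (h : ∀ r, 1 ≤ r → r ≤ k → D r = D' r) : chainWD a W D k = chainWD a W D' k := by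
  induction k with
  | zero => rfl
  | succ k ih =>
    simp only [chainWD]
    rw [ih (fun r h1 h2 => h r h1 (Nat.le_succ_of_le h2)), h (k+1) (by omega) le_rfl]

lemma chainWD_affine (a : ℕ → ℕ) (W : ∀ r : ℕ, Matrix (Fin (a (r+1))) (Fin (a r)) ℝ)
    (D : ∀ r : ℕ, Matrix (Fin (a r)) (Fin (a r)) ℝ) (m : ℕ)
    (A B : Matrix (Fin (a m)) (Fin (a m)) ℝ) (t : ℝ) (k : ℕ) :
    chainWD a W (Function.update D m ((1-t) • A + t • B)) k
      = (1-t) • chainWD a W (Function.update D m A) k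
        + t • chainWD a W (Function.update D m B) k := by
  induction k with
  | zero =>
    show W 0 = (1-t) • W 0 + t • W 0
    rw [← add_smul, sub_add_cancel, one_smul]
  | succ k ih =>
    simp only [chainWD]
    by_cases hm : m = k + 1
    · subst hm
      have hc : ∀ X : Matrix (Fin (a (k+1))) (Fin (a (k+1))) ℝ,
          chainWD a W (Function.update D (k+1) X) k = chainWD a W D k := by
        intro X
        exact chainWD_congr a W _ D k (fun r h1 h2 => Function.update_of_ne (by omega) _ _)
      rw [hc, hc, hc, Function.update_self, Function.update_self, Function.update_self]
      simp only [Matrix.add_mul, Matrix.smul_mul, Matrix.mul_add, Matrix.mul_smul]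
    · rw [Function.update_of_ne (by omega), Function.update_of_ne (by omega),
        Function.update_of_ne (by omega), ih]
      simp only [Matrix.mul_add, Matrix.mul_smul]

lemma key_lemma (a : ℕ → ℕ) (ℓ : ℕ) (W : ∀ r : ℕ, Matrix (Fin (a (r+1))) (Fin (a r)) ℝ)
    (nn : ∀ m n : ℕ, Matrix (Fin m) (Fin n) ℝ → ℝ)
    (hadd : ∀ m n (A B : Matrix (Fin m) (Fin n) ℝ), nn m n (A + B) ≤ nn m n A + nn m n B)
    (hsmul : ∀ m n (c : ℝ) (A : Matrix (Fin m) (Fin n) ℝ), nn m n (c • A) = |c| * nn m n A) :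
    ∀ m : ℕ, ∀ D : ∀ r : ℕ, Matrix (Fin (a r)) (Fin (a r)) ℝ,
      (∀ r i j, i ≠ j → D r i j = 0) → (∀ r i, D r i i ∈ Set.Icc (0:ℝ) 1) →
      (∀ r, m ≤ r → ∀ i, D r i i = 0 ∨ D r i i = 1) →
      ∃ D' : ∀ r : ℕ, Matrix (Fin (a r)) (Fin (a r)) ℝ,
        (∀ r i j, i ≠ j → D' r i j = 0) ∧ (∀ r i, D' r i i = 0 ∨ D' r i i = 1) ∧
        nn (a (ℓ+1)) (a 0) (chainWD a W D ℓ) ≤ nn (a (ℓ+1)) (a 0) (chainWD a W D' ℓ) := by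
  intro m
  induction m with
  | zero =>
    intro D h1 _ h3
    exact ⟨D, h1, fun r i => h3 r (Nat.zero_le r) i, le_rfl⟩
  | succ m ih =>
    have inner : ∀ S : Finset (Fin (a m)), ∀ D : ∀ r : ℕ, Matrix (Fin (a r)) (Fin (a r)) ℝ,
        (∀ r i j, i ≠ j → D r i j = 0) → (∀ r i, D r i i ∈ Set.Icc (0:ℝ) 1) →
        (∀ r, m + 1 ≤ r → ∀ i, D r i i = 0 ∨ D r i i = 1) →
        (∀ i ∉ S, D m i i = 0 ∨ D m i i = 1) →
        ∃ D' : ∀ r : ℕ, Matrix (Fin (a r)) (Fin (a r)) ℝ,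
          (∀ r i j, i ≠ j → D' r i j = 0) ∧ (∀ r i, D' r i i = 0 ∨ D' r i i = 1) ∧
          nn (a (ℓ+1)) (a 0) (chainWD a W D ℓ) ≤ nn (a (ℓ+1)) (a 0) (chainWD a W D' ℓ) := by
      intro S
      induction S using Finset.induction_on with
      | empty =>
        intro D h1 h2 h3 h4
        refine ih D h1 h2 (fun r hr i => ?_)
        rcases Nat.eq_or_lt_of_le hr with h | h
        · subst h; exact h4 i (Finset.notMem_empty i)
        · exact h3 r h i
      | @insert i S hiS ihS =>
        intro D h1 h2 h3 h4
        obtain ⟨ht0, ht1⟩ := h2 m i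
        set A : Matrix (Fin (a m)) (Fin (a m)) ℝ :=
          fun p q => if p = i ∧ q = i then 0 else D m p q with hA
        set B : Matrix (Fin (a m)) (Fin (a m)) ℝ :=
          fun p q => if p = i ∧ q = i then 1 else D m p q with hB
        have hAii : A i i = 0 := by rw [hA]; simp
        have hBii : B i i = 1 := by rw [hB]; simp
        have hAoff : ∀ p q, ¬(p = i ∧ q = i) → A p q = D m p q := by
          intro p q h; rw [hA]; simp [h]
        have hBoff : ∀ p q, ¬(p = i ∧ q = i) → B p q = D m p q := by
          intro p q h; rw [hB]; simp [h]
        have hDm : D m = (1 - D m i i) • A + (D m i i) • B := by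
          funext p q
          by_cases h : p = i ∧ q = i
          · obtain ⟨hp, hq⟩ := h
            subst hp; subst hq
            rw [Matrix.add_apply, Matrix.smul_apply, Matrix.smul_apply, hAii, hBii,
              smul_eq_mul, smul_eq_mul]
            ring
          · rw [Matrix.add_apply, Matrix.smul_apply, Matrix.smul_apply, hAoff p q h,
              hBoff p q h, smul_eq_mul, smul_eq_mul]
            ring
        have hupd : ∀ (X : Matrix (Fin (a m)) (Fin (a m)) ℝ),
            (∀ p q, p ≠ q → X p q = 0) → (∀ p, X p p ∈ Set.Icc (0:ℝ) 1) →
            (∀ j, j ∉ S → X j j = 0 ∨ X j j = 1) →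
            ∃ D' : ∀ r : ℕ, Matrix (Fin (a r)) (Fin (a r)) ℝ,
              (∀ r i j, i ≠ j → D' r i j = 0) ∧ (∀ r i, D' r i i = 0 ∨ D' r i i = 1) ∧
              nn (a (ℓ+1)) (a 0) (chainWD a W (Function.update D m X) ℓ)
                ≤ nn (a (ℓ+1)) (a 0) (chainWD a W D' ℓ) := by
          intro X hX1 hX2 hX3
          refine ihS (Function.update D m X) ?_ ?_ ?_ ?_
          · intro r p q hpq
            by_cases hr : r = m
            · subst hr; rw [Function.update_self]; exact hX1 p q hpq
            · rw [Function.update_of_ne hr]; exact h1 r p q hpq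
          · intro r p
            by_cases hr : r = m
            · subst hr; rw [Function.update_self]; exact hX2 p
            · rw [Function.update_of_ne hr]; exact h2 r p
          · intro r hr p
            rw [Function.update_of_ne (by omega)]; exact h3 r hr p
          · intro j hj
            rw [Function.update_self]; exact hX3 j hj
        have hoffA : ∀ p q, p ≠ q → A p q = 0 := by
          intro p q hpq
          rw [hAoff p q (fun h => hpq (h.1.trans h.2.symm))]
          exact h1 m p q hpq
        have hoffB : ∀ p q, p ≠ q → B p q = 0 := by
          intro p q hpq
          rw [hBoff p q (fun h => hpq (h.1.trans h.2.symm))]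
          exact h1 m p q hpq
        obtain ⟨DA, hDA1, hDA2, hDA3⟩ := hupd A hoffA
          (fun p => by
            by_cases hp : p = i
            · subst hp; rw [hAii]; exact ⟨le_rfl, zero_le_one⟩
            · rw [hAoff p p (fun h => hp h.1)]; exact h2 m p)
          (fun j hj => by
            by_cases hp : j = i
            · subst hp; left; exact hAii
            · rw [hAoff j j (fun h => hp h.1)]
              exact h4 j (by simp [Finset.mem_insert, hp, hj]))
        obtain ⟨DB, hDB1, hDB2, hDB3⟩ := hupd B hoffB
          (fun p => by
            by_cases hp : p = i
            · subst hp; rw [hBii]; exact ⟨zero_le_one, le_rfl⟩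
            · rw [hBoff p p (fun h => hp h.1)]; exact h2 m p)
          (fun j hj => by
            by_cases hp : j = i
            · subst hp; right; exact hBii
            · rw [hBoff j j (fun h => hp h.1)]
              exact h4 j (by simp [Finset.mem_insert, hp, hj]))
        have hchain : chainWD a W D ℓ
            = (1 - D m i i) • chainWD a W (Function.update D m A) ℓ
              + (D m i i) • chainWD a W (Function.update D m B) ℓ := by
          conv_lhs => rw [show D = Function.update D m ((1 - D m i i) • A + (D m i i) • B) from by
            rw [← hDm, Function.update_eq_self]]
          exact chainWD_affine a W D m A B (D m i i) ℓ
        set u := nn (a (ℓ+1)) (a 0) (chainWD a W (Function.update D m A) ℓ) with hu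
        set v := nn (a (ℓ+1)) (a 0) (chainWD a W (Function.update D m B) ℓ) with hv
        have hmax : nn (a (ℓ+1)) (a 0) (chainWD a W D ℓ) ≤ max u v := by
          rw [hchain]
          calc nn (a (ℓ+1)) (a 0) ((1 - D m i i) • chainWD a W (Function.update D m A) ℓ
                  + (D m i i) • chainWD a W (Function.update D m B) ℓ)
              ≤ nn (a (ℓ+1)) (a 0) ((1 - D m i i) • chainWD a W (Function.update D m A) ℓ)
                + nn (a (ℓ+1)) (a 0) ((D m i i) • chainWD a W (Function.update D m B) ℓ) :=
                hadd _ _ _ _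
            _ = (1 - D m i i) * u + (D m i i) * v := by
                rw [hsmul, hsmul, abs_of_nonneg (by linarith), abs_of_nonneg ht0, ← hu, ← hv]
            _ ≤ (1 - D m i i) * max u v + (D m i i) * max u v := by
                have hu' : u ≤ max u v := le_max_left _ _
                have hv' : v ≤ max u v := le_max_right _ _
                have c1 := mul_le_mul_of_nonneg_left hu' (by linarith : (0:ℝ) ≤ 1 - D m i i)
                have c2 := mul_le_mul_of_nonneg_left hv' ht0
                linarith
            _ = max u v := by ring
        rcases le_total u v with h | h
        · exact ⟨DB, hDB1, hDB2, le_trans hmax (by rw [max_eq_right h]; exact hDB3)⟩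
        · exact ⟨DA, hDA1, hDA2, le_trans hmax (by rw [max_eq_left h]; exact hDA3)⟩
    intro D h1 h2 h3
    exact inner Finset.univ D h1 h2 h3 (fun j hj => absurd (Finset.mem_univ j) hj)

/-- The maximum of `‖W ℓ D ℓ ⋯ D 1 W 0‖` over diagonal matrices with entries in `[0,1]`
equals the maximum restricted to diagonal matrices with entries in `{0,1}`, for any
norm `nn` on matrices (subadditive and absolutely homogeneous). -/
theorem max_over_diag_eq_max_over_extreme_points
    (a : ℕ → ℕ) (ℓ : ℕ) (W : ∀ r : ℕ, Matrix (Fin (a (r+1))) (Fin (a r)) ℝ)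
    (nn : ∀ m n : ℕ, Matrix (Fin m) (Fin n) ℝ → ℝ)
    (hadd : ∀ m n (A B : Matrix (Fin m) (Fin n) ℝ), nn m n (A + B) ≤ nn m n A + nn m n B)
    (hsmul : ∀ m n (c : ℝ) (A : Matrix (Fin m) (Fin n) ℝ), nn m n (c • A) = |c| * nn m n A) :
    sSup {x : ℝ | ∃ D : ∀ r : ℕ, Matrix (Fin (a r)) (Fin (a r)) ℝ,
        (∀ r i j, i ≠ j → D r i j = 0) ∧ (∀ r i, D r i i ∈ Set.Icc (0:ℝ) 1) ∧
        x = nn (a (ℓ+1)) (a 0) (chainWD a W D ℓ)} =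
    sSup {x : ℝ | ∃ D : ∀ r : ℕ, Matrix (Fin (a r)) (Fin (a r)) ℝ,
        (∀ r i j, i ≠ j → D r i j = 0) ∧ (∀ r i, D r i i = 0 ∨ D r i i = 1) ∧
        x = nn (a (ℓ+1)) (a 0) (chainWD a W D ℓ)} := by
  set S₁ := {x : ℝ | ∃ D : ∀ r : ℕ, Matrix (Fin (a r)) (Fin (a r)) ℝ,
      (∀ r i j, i ≠ j → D r i j = 0) ∧ (∀ r i, D r i i ∈ Set.Icc (0:ℝ) 1) ∧
      x = nn (a (ℓ+1)) (a 0) (chainWD a W D ℓ)} with hS₁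
  set S₂ := {x : ℝ | ∃ D : ∀ r : ℕ, Matrix (Fin (a r)) (Fin (a r)) ℝ,
      (∀ r i j, i ≠ j → D r i j = 0) ∧ (∀ r i, D r i i = 0 ∨ D r i i = 1) ∧
      x = nn (a (ℓ+1)) (a 0) (chainWD a W D ℓ)} with hS₂
  have hsub : S₂ ⊆ S₁ := by
    rintro x ⟨D, h1, h2, rfl⟩
    refine ⟨D, h1, fun r i => ?_, rfl⟩
    rcases h2 r i with h | h <;> rw [h]
    · exact ⟨le_rfl, zero_le_one⟩
    · exact ⟨zero_le_one, le_rfl⟩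
  have hne₂ : S₂.Nonempty := by
    refine ⟨nn (a (ℓ+1)) (a 0) (chainWD a W (fun _ => 0) ℓ), fun _ => 0, ?_, ?_, rfl⟩
    · intro r i j _; rfl
    · intro r i; left; rfl
  have hne₁ : S₁.Nonempty := hne₂.mono hsub
  have hle : ∀ x ∈ S₁, ∃ y ∈ S₂, x ≤ y := by
    rintro x ⟨D, h1, h2, rfl⟩
    set Dt : ∀ r : ℕ, Matrix (Fin (a r)) (Fin (a r)) ℝ :=
      fun r => if r ≤ ℓ then D r else 0 with hDt
    have hDtle : ∀ r, r ≤ ℓ → Dt r = D r := by intro r hr; rw [hDt]; simp [hr]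
    have hDtgt : ∀ r, ¬ r ≤ ℓ → Dt r = 0 := by intro r hr; rw [hDt]; simp [hr]
    have hchain : chainWD a W D ℓ = chainWD a W Dt ℓ :=
      chainWD_congr a W D Dt ℓ (fun r _ hr => (hDtle r hr).symm)
    obtain ⟨D', hD'1, hD'2, hD'3⟩ := key_lemma a ℓ W nn hadd hsmul (ℓ+1) Dt
      (fun r p q hpq => by
        by_cases hr : r ≤ ℓ
        · rw [hDtle r hr]; exact h1 r p q hpq
        · rw [hDtgt r hr]; rfl)
      (fun r p => by
        by_cases hr : r ≤ ℓ
        · rw [hDtle r hr]; exact h2 r p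
        · rw [hDtgt r hr]; exact ⟨le_rfl, zero_le_one⟩)
      (fun r hr p => by rw [hDtgt r (by omega)]; left; rfl)
    refine ⟨nn (a (ℓ+1)) (a 0) (chainWD a W D' ℓ), ⟨D', hD'1, hD'2, rfl⟩, ?_⟩
    rw [hchain]; exact hD'3
  by_cases hbdd : BddAbove S₂
  · have hub : ∀ x ∈ S₁, x ≤ sSup S₂ := by
      intro x hx
      obtain ⟨y, hy, hxy⟩ := hle x hx
      exact hxy.trans (le_csSup hbdd hy)
    have hbdd₁ : BddAbove S₁ := ⟨sSup S₂, hub⟩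
    exact le_antisymm (csSup_le hne₁ hub) (csSup_le_csSup hbdd₁ hne₂ hsub)
  · rw [Real.sSup_of_not_bddAbove hbdd,
      Real.sSup_of_not_bddAbove (fun h => hbdd (h.mono hsub))]
end

section
/- For weight matrices W₀, …, W_ℓ and diagonal matrices D_r with entries in [0,1], in the l¹ or l∞ operator norm one has ‖W_ℓ D_ℓ W_{ℓ-1} D_{ℓ-1} ⋯ D₁ W₀‖ ≤ K₃ := ‖W_ℓ^abs W_{ℓ-1}^abs ⋯ W₀^abs‖. -/
/-- The l¹ operator norm of a matrix: maximum absolute column sum. -/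
noncomputable def l1N {m n : ℕ} (A : Matrix (Fin m) (Fin n) ℝ) : ℝ :=
  ⨆ j, ∑ i, |A i j|

/-- The l∞ operator norm of a matrix: maximum absolute row sum. -/
noncomputable def linfN {m n : ℕ} (A : Matrix (Fin m) (Fin n) ℝ) : ℝ :=
  ⨆ i, ∑ j, |A i j|

/-- Entrywise absolute value of a matrix. -/
def entAbs {m n : ℕ} (A : Matrix (Fin m) (Fin n) ℝ) : Matrix (Fin m) (Fin n) ℝ :=
  fun i j => |A i j|

/-- The product `W ℓ ^abs * ⋯ * W 0 ^abs` of the entrywise absolute values. -/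
def absWprod (a : ℕ → ℕ) (W : ∀ r : ℕ, Matrix (Fin (a (r+1))) (Fin (a r)) ℝ) :
    (k : ℕ) → Matrix (Fin (a (k+1))) (Fin (a 0)) ℝ
  | 0 => entAbs (W 0)
  | k+1 => entAbs (W (k+1)) * absWprod a W k

lemma abs_chain_le (a : ℕ → ℕ) (W : ∀ r : ℕ, Matrix (Fin (a (r+1))) (Fin (a r)) ℝ)
    (D : ∀ r : ℕ, Matrix (Fin (a r)) (Fin (a r)) ℝ)
    (hD0 : ∀ r i j, i ≠ j → D r i j = 0)
    (hD1 : ∀ r i, D r i i ∈ Set.Icc (0:ℝ) 1) (k : ℕ) :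
    ∀ i j, |chainWD a W D k i j| ≤ absWprod a W k i j := by
  induction k with
  | zero => intro i j; simp [chainWD, absWprod, entAbs]
  | succ k ih =>
    intro i j
    have hDC : ∀ m, (D (k+1) * chainWD a W D k) m j
        = D (k+1) m m * chainWD a W D k m j := by
      intro m
      rw [Matrix.mul_apply]
      rw [Finset.sum_eq_single m]
      · intro b _ hb; rw [hD0 (k+1) m b (Ne.symm hb), zero_mul]
      · intro h; exact absurd (Finset.mem_univ m) h
    have : chainWD a W D (k+1) i j = ∑ m, W (k+1) i m * (D (k+1) m m * chainWD a W D k m j) := by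
      show (W (k+1) * (D (k+1) * chainWD a W D k)) i j = _
      rw [Matrix.mul_apply]
      exact Finset.sum_congr rfl fun m _ => by rw [hDC m]
    rw [this]
    calc |∑ m, W (k+1) i m * (D (k+1) m m * chainWD a W D k m j)|
        ≤ ∑ m, |W (k+1) i m * (D (k+1) m m * chainWD a W D k m j)| :=
          Finset.abs_sum_le_sum_abs _ _
      _ ≤ ∑ m, |W (k+1) i m| * absWprod a W k m j := by
          apply Finset.sum_le_sum
          intro m _
          rw [abs_mul, abs_mul]
          apply mul_le_mul_of_nonneg_left _ (abs_nonneg _)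
          have h1 : |D (k+1) m m| ≤ 1 := by
            have := hD1 (k+1) m
            rw [abs_le]; constructor <;> [linarith [this.1]; exact this.2]
          calc |D (k+1) m m| * |chainWD a W D k m j|
              ≤ 1 * |chainWD a W D k m j| :=
                mul_le_mul_of_nonneg_right h1 (abs_nonneg _)
            _ = |chainWD a W D k m j| := one_mul _
            _ ≤ absWprod a W k m j := ih m j
      _ = absWprod a W (k+1) i j := by
          show _ = (entAbs (W (k+1)) * absWprod a W k) i j
          rw [Matrix.mul_apply]; rfl

lemma entry_mono_l1 {m n : ℕ} {A B : Matrix (Fin m) (Fin n) ℝ}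
    (h : ∀ i j, |A i j| ≤ B i j) : l1N A ≤ l1N B := by
  unfold l1N
  rcases isEmpty_or_nonempty (Fin n) with he | hne
  · simp [Real.iSup_of_isEmpty]
  · apply ciSup_le
    intro j
    calc ∑ i, |A i j| ≤ ∑ i, |B i j| := by
          apply Finset.sum_le_sum; intro i _
          exact (h i j).trans (le_abs_self _)
      _ ≤ ⨆ j, ∑ i, |B i j| := le_ciSup (f := fun j => ∑ i, |B i j|) (Set.Finite.bddAbove (Set.finite_range _)) j

lemma entry_mono_linf {m n : ℕ} {A B : Matrix (Fin m) (Fin n) ℝ}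
    (h : ∀ i j, |A i j| ≤ B i j) : linfN A ≤ linfN B := by
  unfold linfN
  rcases isEmpty_or_nonempty (Fin m) with he | hne
  · simp [Real.iSup_of_isEmpty]
  · apply ciSup_le
    intro i
    calc ∑ j, |A i j| ≤ ∑ j, |B i j| := by
          apply Finset.sum_le_sum; intro j _
          exact (h i j).trans (le_abs_self _)
      _ ≤ ⨆ i, ∑ j, |B i j| := le_ciSup (f := fun i => ∑ j, |B i j|) (Set.Finite.bddAbove (Set.finite_range _)) i

/-- In the l¹ or l∞ operator norm, `‖W ℓ D ℓ ⋯ D 1 W 0‖ ≤ K₃ = ‖W ℓ^abs ⋯ W 0^abs‖`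
for diagonal matrices `D r` with entries in `[0,1]`. -/
theorem chain_norm_le_K3
    (a : ℕ → ℕ) (ℓ : ℕ) (W : ∀ r : ℕ, Matrix (Fin (a (r+1))) (Fin (a r)) ℝ)
    (D : ∀ r : ℕ, Matrix (Fin (a r)) (Fin (a r)) ℝ)
    (hD0 : ∀ r i j, i ≠ j → D r i j = 0)
    (hD1 : ∀ r i, D r i i ∈ Set.Icc (0:ℝ) 1) :
    l1N (chainWD a W D ℓ) ≤ l1N (absWprod a W ℓ) ∧
    linfN (chainWD a W D ℓ) ≤ linfN (absWprod a W ℓ) := by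
  have h := abs_chain_le a W D hD0 hD1 ℓ
  exact ⟨entry_mono_l1 h, entry_mono_linf h⟩
end
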